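/- With the notation of the paper: let $H$ be a real Hilbert space, $\varphi : D \to H$ be $C^{2M}$, $x_0 \in D$, and assume the vectors $\varphi(x_0), \varphi'(x_0), \ldots, \varphi^{(2M-1)}(x_0)$ are linearly independent. Let $\eta_W(x) = \langle \varphi(x), p_W\rangle$ where $p_W$ is the minimal-norm element with $\langle \varphi(x_0), p_W\rangle = 1$ and $\langle \varphi^{(k)}(x_0), p_W\rangle = 0$ for $1 \le k \le 2M-1$. Then the $(2M+1)\times(2M+1)$ determinant whose entry in row $k$ (for $k=0,\ldots,2M$) and column $\ell$ (for $\ell=0,\ldots,2M-1$) is $\langle \varphi^{(k)}(x_0), \varphi^{(\ell)}(x_0)\rangle$, and whose last column is $(1,0,\ldots,0)^T$, equals $-\eta_W^{(2M)}(x_0) \det(F^*F)$, where $F^*F$ is the Gram matrix of $(\varphi^{(k)}(x_0))_{k=0}^{2M-1}$. -/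

import Mathlib

/-!
The constraints defining `p_W` only see `p_W` through its inner products with
`v_k = φ^{(k)}(x₀)`, `k < 2M`, and orthogonal projection onto `span (v_k)` preserves these
while not increasing the norm; so the minimal-norm `p_W` lies in that span, say
`p_W = ∑ c_l v_l`. Then for every row `k ≤ 2M` of the bordered matrix,
`∑ c_l ⟨φ^{(k)}, φ^{(l)}⟩ = ⟨φ^{(k)}, p_W⟩`, which equals the last entry `δ_{k0}` except in
row `2M`, where it is `η_W^{(2M)}(x₀)`. Subtracting `∑ c_l · (column l)` from the last column
leaves `-η_W^{(2M)}(x₀) e_{2M}` there, and expanding along it gives the claim.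
-/

theorem mem_span_range_of_norm_le {𝕜 E ι : Type*} [RCLike 𝕜] [NormedAddCommGroup E]
    [InnerProductSpace 𝕜 E] [Finite ι] (v : ι → E) {p : E}
    (hmin : ∀ q : E, (∀ k, inner 𝕜 (v k) q = inner 𝕜 (v k) p) → ‖p‖ ≤ ‖q‖) :
    p ∈ Submodule.span 𝕜 (Set.range v) := by
  set K := Submodule.span 𝕜 (Set.range v)
  have : FiniteDimensional 𝕜 K := FiniteDimensional.span_of_finite 𝕜 (Set.finite_range v)
  have hproj : ∀ k, inner 𝕜 (v k) (K.starProjection p) = inner 𝕜 (v k) p := fun k => by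
    rw [← Submodule.inner_starProjection_left_eq_right,
      Submodule.starProjection_eq_self_iff.mpr (Submodule.subset_span (Set.mem_range_self k))]
  rw [Submodule.mem_iff_norm_starProjection]
  exact le_antisymm (K.norm_starProjection_apply_le p) (hmin _ hproj)

theorem ContinuousLinearMap.iteratedDeriv_comp_left {𝕜 F G : Type*} [NontriviallyNormedField 𝕜]
    [NormedAddCommGroup F] [NormedSpace 𝕜 F] [NormedAddCommGroup G] [NormedSpace 𝕜 G]
    (g : F →L[𝕜] G) {f : 𝕜 → F} {n : WithTop ℕ∞} {x : 𝕜} (hf : ContDiffAt 𝕜 n f x) {i : ℕ}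
    (hi : i ≤ n) : iteratedDeriv i (g ∘ f) x = g (iteratedDeriv i f x) := by
  simp only [iteratedDeriv_eq_iteratedFDeriv, g.iteratedFDeriv_comp_left hf hi]
  rfl

theorem iteratedDeriv_inner_const_right {H : Type*} [NormedAddCommGroup H]
    [InnerProductSpace ℝ H] {f : ℝ → H} {n : ℕ} {x : ℝ} (hf : ContDiffAt ℝ n f x) (p : H) :
    iteratedDeriv n (fun t => inner ℝ (f t) p) x = inner ℝ (iteratedDeriv n f x) p := by
  simp_rw [real_inner_comm p]
  exact (innerSL ℝ p).iteratedDeriv_comp_left hf le_rfl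

theorem Matrix.det_eq_neg_mul_det_submatrix_of_col_last {R : Type*} [CommRing R] {n : ℕ}
    (A : Matrix (Fin (n + 1)) (Fin (n + 1)) R) (c : Fin n → R) (s : R)
    (h : ∀ k, A k (Fin.last n) =
      ∑ l, c l * A k l.castSucc - (Pi.single (Fin.last n) s : Fin (n + 1) → R) k) :
    A.det = -s * (A.submatrix Fin.castSucc Fin.castSucc).det := by
  set B := A.updateCol (Fin.last n) (Pi.single (Fin.last n) (-s))
  have hAB : A = B.updateCol (Fin.last n)
      fun k => ∑ i, (Fin.snoc c 1 : Fin (n + 1) → R) i • B k i := by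
    ext k j
    refine Fin.lastCases ?_ (fun l => ?_) j
    · simp [B, Fin.sum_univ_castSucc, h, sub_eq_add_neg, Pi.single_neg]
    · simp [B]
  have hB : B.det = -s * (A.submatrix Fin.castSucc Fin.castSucc).det := by
    have hminor :
        B.submatrix Fin.castSucc Fin.castSucc = A.submatrix Fin.castSucc Fin.castSucc := by
      ext k l
      simp [B, Fin.castSucc_ne_last]
    rw [Matrix.det_succ_column B (Fin.last n), Finset.sum_eq_single (Fin.last n),
      Fin.succAbove_last, hminor]
    · simp [B, ← two_mul]
    · intro i _ hi
      simp [B, hi]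
    · simp
  rw [← hB]
  conv_lhs => rw [hAB, Matrix.det_updateCol_sum, Fin.snoc_last, one_smul]

theorem stmt6_general {H : Type*} [NormedAddCommGroup H] [InnerProductSpace ℝ H]
    (M : ℕ) (hM : 1 ≤ M)
    (φ : ℝ → H) (hφ : ContDiff ℝ (2 * M) φ) (x0 : ℝ)
    (pW : H)
    (hpW1 : (inner ℝ (φ x0) pW : ℝ) = 1)
    (hpW2 : ∀ k : Fin (2 * M), k.val ≠ 0 → (inner ℝ (iteratedDeriv k.val φ x0) pW : ℝ) = 0)
    (hmin : ∀ q : H, (inner ℝ (φ x0) q : ℝ) = 1 →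
      (∀ k : Fin (2 * M), k.val ≠ 0 → (inner ℝ (iteratedDeriv k.val φ x0) q : ℝ) = 0) →
      ‖pW‖ ≤ ‖q‖) :
    (Matrix.of fun k l : Fin (2 * M + 1) =>
      if l.val < 2 * M then
        (inner ℝ (iteratedDeriv k.val φ x0) (iteratedDeriv l.val φ x0) : ℝ)
      else if k.val = 0 then (1 : ℝ) else 0).det
    = -(iteratedDeriv (2 * M) (fun t => (inner ℝ (φ t) pW : ℝ)) x0) *
        (Matrix.of fun k l : Fin (2 * M) =>
          (inner ℝ (iteratedDeriv k.val φ x0) (iteratedDeriv l.val φ x0) : ℝ)).det := by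
  set v : Fin (2 * M) → H := fun k => iteratedDeriv k.val φ x0
  have hpW : ∀ k, inner ℝ (v k) pW = if k.val = 0 then 1 else 0 := fun k => by
    split_ifs with hk
    · simpa [v, hk] using hpW1
    · exact hpW2 k hk
  have hspan : pW ∈ Submodule.span ℝ (Set.range v) := mem_span_range_of_norm_le v fun q hq =>
    hmin q (by simpa [v] using (hq ⟨0, by omega⟩).trans (hpW ⟨0, by omega⟩))
      fun k hk => by rw [hq k, hpW k, if_neg hk]
  obtain ⟨c, hc⟩ := (Submodule.mem_span_range_iff_exists_fun ℝ).mp hspan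
  rw [iteratedDeriv_inner_const_right hφ.contDiffAt pW]
  refine (Matrix.det_eq_neg_mul_det_submatrix_of_col_last _ c
    (inner ℝ (iteratedDeriv (2 * M) φ x0) pW) fun k => ?_).trans ?_
  · have hrow : ∑ l : Fin (2 * M),
        c l * inner ℝ (iteratedDeriv k.val φ x0) (iteratedDeriv l φ x0) =
          inner ℝ (iteratedDeriv k.val φ x0) pW := by
      simp [← hc, v, inner_sum, real_inner_smul_right]
    simp only [Matrix.of_apply, Fin.val_last, lt_irrefl, if_false, Fin.val_castSucc, Fin.is_lt,
      if_true, hrow]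
    refine Fin.lastCases ?_ (fun j => ?_) k
    · rw [Pi.single_eq_same, Fin.val_last, sub_self, if_neg (by omega)]
    · simpa [Fin.castSucc_ne_last] using (hpW j).symm
  · congr 2
    ext k l
    simp

/-- Lemma 3.3 of the paper: the bordered derivative-Gram determinant equals
`-η_W^{(2M)}(x₀) det(F*F)`. -/
theorem stmt6 {H : Type*} [NormedAddCommGroup H] [InnerProductSpace ℝ H] [CompleteSpace H]
    (M : ℕ) (hM : 1 ≤ M)
    (φ : ℝ → H) (hφ : ContDiff ℝ (2 * M) φ) (x0 : ℝ)
    (hlin : LinearIndependent ℝ (fun k : Fin (2 * M) => iteratedDeriv k.val φ x0))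
    (pW : H)
    (hpW1 : (inner ℝ (φ x0) pW : ℝ) = 1)
    (hpW2 : ∀ k : Fin (2 * M), k.val ≠ 0 → (inner ℝ (iteratedDeriv k.val φ x0) pW : ℝ) = 0)
    (hmin : ∀ q : H, (inner ℝ (φ x0) q : ℝ) = 1 →
      (∀ k : Fin (2 * M), k.val ≠ 0 → (inner ℝ (iteratedDeriv k.val φ x0) q : ℝ) = 0) →
      ‖pW‖ ≤ ‖q‖) :
    (Matrix.of fun k l : Fin (2 * M + 1) =>
      if l.val < 2 * M then
        (inner ℝ (iteratedDeriv k.val φ x0) (iteratedDeriv l.val φ x0) : ℝ)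
      else if k.val = 0 then (1 : ℝ) else 0).det
    = -(iteratedDeriv (2 * M) (fun t => (inner ℝ (φ t) pW : ℝ)) x0) *
        (Matrix.of fun k l : Fin (2 * M) =>
          (inner ℝ (iteratedDeriv k.val φ x0) (iteratedDeriv l.val φ x0) : ℝ)).det :=
  stmt6_general M hM φ hφ x0 pW hpW1 hpW2 hmin
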